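/- If two natural assignments of differential characters to the geometric data (fiber bundle with geometric structure) have the same curvature form for all data, and differential characteristic classes of even degree for complex vector bundles are determined by naturality and curvature, then the two assignments agree. Concretely (abstract form): let F, G assign to each smooth manifold B and each object ξ over B (with pullback) an element of Ĥ^{even}(B; ℝ/ℚ), both natural with respect to pullback and with δ₁(F(ξ)) = δ₁(G(ξ)) for all ξ; if moreover characters with vanishing curvature that are natural and classified by a classifying space with torsion-free cohomology are zero, then F = G. -/

import Mathlib

/-- An abstract model of the complex of smooth singular chains and of smooth
differential forms on a smooth manifold `X`, together with integration of forms
over chains, the exterior derivative and Stokes' theorem.  This is exactly the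
structure needed to define Cheeger--Simons differential characters. -/
structure ChainFormSetup where
  /-- smooth singular `k`-chains -/
  Chain : ℕ → Type
  [chainGroup : ∀ k, AddCommGroup (Chain k)]
  /-- smooth differential `k`-forms -/
  Form : ℕ → Type
  [formGroup : ∀ k, AddCommGroup (Form k)]
  /-- the boundary operator on smooth singular chains -/
  boundary : ∀ k, Chain (k + 1) →+ Chain k
  boundary_boundary : ∀ k (c : Chain (k + 2)), boundary k (boundary (k + 1) c) = 0
  /-- integration of a `k`-form over a smooth singular `k`-chain -/
  integ : ∀ k, Form k →+ Chain k →+ ℝ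
  /-- the exterior derivative -/
  d : ∀ k, Form k →+ Form (k + 1)
  d_d : ∀ k (ω : Form k), d (k + 1) (d k ω) = 0
  /-- Stokes' theorem -/
  stokes : ∀ k (ω : Form k) (c : Chain (k + 1)),
    integ (k + 1) (d k ω) c = integ k ω (boundary k c)

attribute [instance] ChainFormSetup.chainGroup ChainFormSetup.formGroup

namespace ChainFormSetup

variable (S : ChainFormSetup)

/-- the group of smooth singular `k`-cycles `Z_k(X)` -/
def Cycle : ∀ k, AddSubgroup (S.Chain k)
  | 0 => ⊤
  | (k + 1) => (S.boundary k).ker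

theorem boundary_mem_cycle (k : ℕ) (c : S.Chain (k + 1)) :
    S.boundary k c ∈ S.Cycle k := by
  cases k with
  | zero => exact AddSubgroup.mem_top _
  | succ k => exact AddMonoidHom.mem_ker.mpr (S.boundary_boundary k c)

/-- the boundary of a `(k+1)`-chain, viewed as a `k`-cycle -/
def boundaryCycle (k : ℕ) : S.Chain (k + 1) →+ S.Cycle k where
  toFun c := ⟨S.boundary k c, S.boundary_mem_cycle k c⟩
  map_zero' := by ext; simp
  map_add' c₁ c₂ := by ext; simp

/-- reduction of a real number modulo the subring `A ⊂ ℝ`, with values in `ℝ/A` -/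
def modA (A : Subring ℝ) : ℝ →+ ℝ ⧸ A.toAddSubgroup :=
  QuotientAddGroup.mk' A.toAddSubgroup

/-- A degree `k+1` Cheeger--Simons differential character with coefficients in
`ℝ/A`: a group homomorphism on smooth singular `k`-cycles together with a
curvature form `curv` such that `f(∂c) = ∫_c curv mod A` for every `(k+1)`-chain
`c`. -/
structure DiffChar (A : Subring ℝ) (k : ℕ) where
  toFun : S.Cycle k →+ ℝ ⧸ A.toAddSubgroup
  curv : S.Form (k + 1)
  curv_spec : ∀ c : S.Chain (k + 1),
    toFun (S.boundaryCycle k c) = modA A (S.integ (k + 1) curv c)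

variable {S}

instance (A : Subring ℝ) (k : ℕ) : Zero (S.DiffChar A k) :=
  ⟨{ toFun := 0
     curv := 0
     curv_spec := by simp [modA] }⟩

instance (A : Subring ℝ) (k : ℕ) : Add (S.DiffChar A k) :=
  ⟨fun f g =>
    { toFun := f.toFun + g.toFun
      curv := f.curv + g.curv
      curv_spec := by simp [f.curv_spec, g.curv_spec] }⟩

instance (A : Subring ℝ) (k : ℕ) : Neg (S.DiffChar A k) :=
  ⟨fun f =>
    { toFun := -f.toFun
      curv := -f.curv
      curv_spec := by simp [f.curv_spec] }⟩

instance (A : Subring ℝ) (k : ℕ) : Sub (S.DiffChar A k) :=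
  ⟨fun f g =>
    { toFun := f.toFun - g.toFun
      curv := f.curv - g.curv
      curv_spec := by simp [f.curv_spec, g.curv_spec, sub_eq_add_neg] }⟩

variable (S)

/-- `Ω^k_A(X)`: the property of being a closed `k`-form all of whose periods lie
in the subring `A`. -/
def IsClosedWithPeriodsIn (A : Subring ℝ) {k : ℕ} (ω : S.Form k) : Prop :=
  S.d k ω = 0 ∧ ∀ z : S.Cycle k, S.integ k ω z ∈ A

/-- `i₂`: the differential character determined by integration of a `k`-form
against `k`-cycles, with curvature `dα`. -/
def i2 (A : Subring ℝ) {k : ℕ} (α : S.Form k) : S.DiffChar A k where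
  toFun := (modA A).comp ((S.integ k α).comp (S.Cycle k).subtype)
  curv := S.d k α
  curv_spec c := by simp [modA, boundaryCycle, S.stokes]

end ChainFormSetup

namespace ChainFormSetup

/-- The pushforward on smooth singular chains and pullback on differential forms
induced by a smooth map `φ : Y → X`, where `S` models the manifold `X` and `T`
models the manifold `Y`; compatible with boundaries, exterior derivatives and
integration (change of variables). -/
structure SetupMap (S T : ChainFormSetup) where
  /-- the pushforward `φ_*` on smooth singular chains -/
  chainMap : ∀ k, T.Chain k →+ S.Chain k
  chainMap_boundary : ∀ k (c : T.Chain (k + 1)),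
    chainMap k (T.boundary k c) = S.boundary k (chainMap (k + 1) c)
  /-- the pullback `φ^*` on differential forms -/
  formPull : ∀ k, S.Form k →+ T.Form k
  formPull_d : ∀ k (ω : S.Form k), T.d k (formPull k ω) = formPull (k + 1) (S.d k ω)
  integ_pull : ∀ k (ω : S.Form k) (c : T.Chain k),
    S.integ k ω (chainMap k c) = T.integ k (formPull k ω) c

variable {S T U : ChainFormSetup}

theorem SetupMap.chainMap_mem_cycle (φ : SetupMap S T) (k : ℕ) (z : T.Cycle k) :
    φ.chainMap k (z : T.Chain k) ∈ S.Cycle k := by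
  cases k with
  | zero => exact AddSubgroup.mem_top _
  | succ k =>
      refine AddMonoidHom.mem_ker.mpr ?_
      rw [← φ.chainMap_boundary k z]
      have hz : T.boundary k (z : T.Chain (k + 1)) = 0 := AddMonoidHom.mem_ker.mp z.2
      rw [hz, map_zero]

/-- the induced pushforward on cycles -/
def SetupMap.cycleMap (φ : SetupMap S T) (k : ℕ) : T.Cycle k →+ S.Cycle k where
  toFun z := ⟨φ.chainMap k z, φ.chainMap_mem_cycle k z⟩
  map_zero' := by ext; simp
  map_add' z₁ z₂ := by ext; simp

/-- pullback of differential characters along a smooth map: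
`(φ^*f)(z) = f(φ_* z)`, with curvature `φ^*(curv f)`. -/
def SetupMap.pull (φ : SetupMap S T) {A : Subring ℝ} {k : ℕ}
    (f : S.DiffChar A k) : T.DiffChar A k where
  toFun := f.toFun.comp (φ.cycleMap k)
  curv := φ.formPull (k + 1) f.curv
  curv_spec c := by
    have h1 : (φ.cycleMap k) (T.boundaryCycle k c) =
        S.boundaryCycle k (φ.chainMap (k + 1) c) := by
      ext
      simp [cycleMap, boundaryCycle, φ.chainMap_boundary]
    rw [AddMonoidHom.comp_apply, h1, f.curv_spec, φ.integ_pull]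

/-- the setup map induced by the identity map -/
def SetupMap.id (S : ChainFormSetup) : SetupMap S S where
  chainMap k := AddMonoidHom.id _
  chainMap_boundary k c := rfl
  formPull k := AddMonoidHom.id _
  formPull_d k ω := rfl
  integ_pull k ω c := rfl

/-- composition of setup maps, corresponding to composition of smooth maps -/
def SetupMap.comp (ψ : SetupMap S T) (φ : SetupMap T U) : SetupMap S U where
  chainMap k := (ψ.chainMap k).comp (φ.chainMap k)
  chainMap_boundary k c := by
    simp [AddMonoidHom.comp_apply, φ.chainMap_boundary, ψ.chainMap_boundary]
  formPull k := (φ.formPull k).comp (ψ.formPull k)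
  formPull_d k ω := by
    simp [AddMonoidHom.comp_apply, φ.formPull_d, ψ.formPull_d]
  integ_pull k ω c := by
    simp [AddMonoidHom.comp_apply, ψ.integ_pull, φ.integ_pull]

end ChainFormSetup

/-- `ℚ` regarded as a (proper) subring of `ℝ`. -/
noncomputable def ratSub : Subring ℝ := (Rat.castHom ℝ).range

/-- An abstract site of geometric families (proper submersions with closed
`spin^c` fibers of even relative dimension equipped with all the geometric data,
together with Hermitian bundles with unitary connections whose fiberwise Dirac
kernels form superbundles).  `Hom ξ η` is the type of smooth maps `f` between
the bases with `ξ = f^*η`; `baseMap` records the induced chain/form maps. -/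
structure GeomSite where
  /-- geometric families -/
  Fam : Type
  /-- the base manifold of a family -/
  Base : Fam → ChainFormSetup
  /-- smooth maps of bases realizing the first family as pullback of the second -/
  Hom : Fam → Fam → Type
  /-- the induced maps on chains and forms of the bases -/
  baseMap : ∀ {ξ η : Fam}, Hom ξ η → ChainFormSetup.SetupMap (Base η) (Base ξ)

/-- Naturality of an assignment of even-degree differential characters
(`Ĥ^{2m+2}(Base ξ; ℝ/A)` corresponds to `DiffChar A (2m+1)`) to geometric
families: compatibility with pullback. -/
def GeomSite.Natural (G : GeomSite) (A : Subring ℝ)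
    (F : ∀ ξ : G.Fam, ∀ m : ℕ, (G.Base ξ).DiffChar A (2 * m + 1)) : Prop :=
  ∀ ⦃ξ η : G.Fam⦄ (φ : G.Hom ξ η) (m : ℕ),
    F ξ m = (G.baseMap φ).pull (F η m)

namespace ChainFormSetup

variable {S T : ChainFormSetup} {A : Subring ℝ} {k : ℕ}

theorem DiffChar.ext {f g : S.DiffChar A k} (htoFun : f.toFun = g.toFun)
    (hcurv : f.curv = g.curv) : f = g := by
  cases f
  cases g
  subst htoFun hcurv
  rfl

@[simp]
theorem DiffChar.toFun_sub (f g : S.DiffChar A k) : (f - g).toFun = f.toFun - g.toFun :=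
  rfl

@[simp]
theorem DiffChar.curv_sub (f g : S.DiffChar A k) : (f - g).curv = f.curv - g.curv :=
  rfl

@[simp]
theorem DiffChar.toFun_zero : (0 : S.DiffChar A k).toFun = 0 :=
  rfl

@[simp]
theorem DiffChar.curv_zero : (0 : S.DiffChar A k).curv = 0 :=
  rfl

theorem DiffChar.eq_of_sub_eq_zero {f g : S.DiffChar A k} (h : f - g = 0) : f = g :=
  DiffChar.ext
    (sub_eq_zero.mp (by rw [← DiffChar.toFun_sub, h, DiffChar.toFun_zero]))
    (sub_eq_zero.mp (by rw [← DiffChar.curv_sub, h, DiffChar.curv_zero]))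

theorem SetupMap.pull_sub (φ : SetupMap S T) (f g : S.DiffChar A k) :
    φ.pull (f - g) = φ.pull f - φ.pull g :=
  DiffChar.ext (AddMonoidHom.sub_comp _ _ _) (map_sub _ _ _)

end ChainFormSetup

theorem GeomSite.Natural.sub {G : GeomSite} {A : Subring ℝ}
    {F F' : ∀ ξ : G.Fam, ∀ m : ℕ, (G.Base ξ).DiffChar A (2 * m + 1)}
    (hF : G.Natural A F) (hF' : G.Natural A F') :
    G.Natural A (fun ξ m => F ξ m - F' ξ m) := by
  intro ξ η φ m
  dsimp only
  rw [hF φ m, hF' φ m, ChainFormSetup.SetupMap.pull_sub]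

/-- Abstract uniqueness (Proposition 3.1): two natural
assignments `F`, `G` of even-degree differential characters in
`Ĥ^{even}(B; ℝ/ℚ)` to geometric families with equal curvatures agree, provided
every natural assignment of flat (zero-curvature) characters vanishes (as holds
when the classifying space has torsion-free cohomology). -/
theorem natural_assignment_determined_by_curvature (G : GeomSite)
    (F F' : ∀ ξ : G.Fam, ∀ m : ℕ, (G.Base ξ).DiffChar ratSub (2 * m + 1))
    (hF : G.Natural ratSub F) (hF' : G.Natural ratSub F')
    (hcurv : ∀ ξ m, (F ξ m).curv = (F' ξ m).curv)
    (hflat : ∀ H : ∀ ξ : G.Fam, ∀ m : ℕ, (G.Base ξ).DiffChar ratSub (2 * m + 1),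
      G.Natural ratSub H → (∀ ξ m, (H ξ m).curv = 0) → ∀ ξ m, H ξ m = 0) :
    ∀ ξ m, F ξ m = F' ξ m := by
  have hflat_difference : ∀ ξ m, (F ξ m - F' ξ m).curv = 0 := fun ξ m => by
    rw [ChainFormSetup.DiffChar.curv_sub, hcurv, sub_self]
  intro ξ m
  exact ChainFormSetup.DiffChar.eq_of_sub_eq_zero
    (hflat _ (hF.sub hF') hflat_difference ξ m)
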